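/- arXiv:2605.23681 — 2 statements merged into one kernel-verified Lean document; each statement's English description precedes it below -/
import Mathlib

section
/- Let C and C' be F_q-subspaces of M_n(F_{q^s}) of F_q-dimension k with F_q-bases (A_1, …, A_k) and (B_1, …, B_k) respectively. If for every invertible Q ∈ M_k(F_q) and every field automorphism ρ of F_{q^s} one has D(B_1, …, B_k) ≠ { ρ(v)·Q : v ∈ D(A_1, …, A_k) }, then there exist no invertible X, Y ∈ M_n(F_{q^s}) and field automorphism ρ' of F_{q^s} with C' = { X A^{ρ'} Y : A ∈ C }; that is, C and C' are inequivalent as matrix rank-metric codes. -/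
/-- The vector rank-metric code attached to a tuple `(A 1, …, A k)` of `n × n`
matrices over `L`: the set of vectors `(f (A 1), …, f (A k))` as `f` ranges over
all `L`-linear functionals on `Mₙ(L)`. -/
def vcode {L : Type*} [Field L] {n k : ℕ} (A : Fin k → Matrix (Fin n) (Fin n) L) :
    Set (Fin k → L) :=
  { v | ∃ f : Matrix (Fin n) (Fin n) L →ₗ[L] L, v = fun i => f (A i) }

/-!
An equivalence `M ↦ X M^ρ Y` is a `ρ`-semilinear bijection `ψ` of `Mₙ(L)`. The image of `K` in
`L` is the set of roots of `T^|K| - T`, so `ρ` preserves it; writing `B i = ψ (∑ j, c i j • A j)`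
with `c` over `K` therefore gives `B i = ∑ j, Q j i • ψ (A j)` with `Q` over `K`, invertible
because the `B i` are independent. Composing functionals with `ψ` identifies `D(ψ ∘ A)` with
`ρ(D(A))`, hence `D(B) = ρ(D(A)) · Q`.
-/

open Polynomial in
theorem FiniteField.mem_range_algebraMap_iff_pow_card_eq {K L : Type*} [Field K] [Fintype K]
    [Field L] [Algebra K L] {x : L} :
    x ∈ (algebraMap K L).range ↔ x ^ Fintype.card K = x := by
  have hne : (X ^ Fintype.card K - X : K[X]) ≠ 0 :=
    X_pow_card_sub_X_ne_zero K Fintype.one_lt_card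
  have hsplit : Splits (X ^ Fintype.card K - X : K[X]) := by
    rw [splits_iff_card_roots, roots_X_pow_card_sub_X,
      X_pow_card_sub_X_natDegree_eq K Fintype.one_lt_card]
    rfl
  constructor
  · rintro ⟨a, rfl⟩
    rw [← map_pow, FiniteField.pow_card]
  · intro hx
    exact hsplit.mem_range_of_isRoot hne (by simp [hx])

theorem FiniteField.ringHom_algebraMap_mem_range {K L L' : Type*} [Field K] [Fintype K]
    [Field L] [Algebra K L] [Field L'] [Algebra K L'] (ρ : L →+* L') (a : K) :
    ρ (algebraMap K L a) ∈ (algebraMap K L').range := by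
  rw [FiniteField.mem_range_algebraMap_iff_pow_card_eq, ← map_pow, ← map_pow,
    FiniteField.pow_card]

theorem Matrix.isUnit_of_linearIndependent_sum_smul {K V ι : Type*} [Field K] [Fintype ι]
    [DecidableEq ι] [AddCommGroup V] [Module K V] (N : ι → V) (Q : Matrix ι ι K)
    (h : LinearIndependent K fun i => ∑ j, Q j i • N j) : IsUnit Q := by
  rw [← Matrix.linearIndependent_cols_iff_isUnit]
  exact h.of_comp (Fintype.linearCombination K N)

section vcode

variable {L : Type*} [Field L] {n k : ℕ}

theorem vcode_sum_smul {m : ℕ} (A : Fin m → Matrix (Fin n) (Fin n) L)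
    (P : Matrix (Fin m) (Fin k) L) :
    vcode (fun i => ∑ j, P j i • A j) = (fun v => Matrix.vecMul v P) '' vcode A := by
  ext v
  simp only [vcode, Set.mem_ofPred_eq, Set.mem_image]
  constructor
  · rintro ⟨f, rfl⟩
    exact ⟨_, ⟨f, rfl⟩, by ext i; simp [Matrix.vecMul, dotProduct, mul_comm]⟩
  · rintro ⟨_, ⟨f, rfl⟩, rfl⟩
    exact ⟨f, by ext i; simp [Matrix.vecMul, dotProduct, mul_comm]⟩

attribute [local instance] RingHomInvPair.of_ringEquiv RingHomInvPair.of_ringEquiv_symm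

theorem vcode_semilinearEquiv_comp (ρ : L ≃+* L)
    (e : Matrix (Fin n) (Fin n) L ≃ₛₗ[(ρ : L →+* L)] Matrix (Fin n) (Fin n) L)
    (A : Fin k → Matrix (Fin n) (Fin n) L) :
    vcode (fun i => e (A i)) = (fun v i => ρ (v i)) '' vcode A := by
  ext v
  constructor
  · rintro ⟨f, rfl⟩
    let g : Matrix (Fin n) (Fin n) L →ₗ[L] L :=
      { toFun := fun M => ρ.symm (f (e M))
        map_add' := by simp
        map_smul' := fun c M => by simp [map_smulₛₗ] }
    exact ⟨_, ⟨g, rfl⟩, by simp [g]⟩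
  · rintro ⟨_, ⟨g, rfl⟩, rfl⟩
    let f : Matrix (Fin n) (Fin n) L →ₗ[L] L :=
      { toFun := fun M => ρ (g (e.symm M))
        map_add' := by simp
        map_smul' := fun c M => by simp [map_smulₛₗ] }
    exact ⟨f, by simp [f]⟩

end vcode

theorem inequiv_of_vcode_inequiv_general (n k : ℕ) (K L : Type*) [Field K] [Fintype K] [Field L]
    [Algebra K L]
    (C C' : Submodule K (Matrix (Fin n) (Fin n) L))
    (A B : Fin k → Matrix (Fin n) (Fin n) L)
    (hAspan : Submodule.span K (Set.range A) = C)
    (hB : LinearIndependent K B) (hBspan : Submodule.span K (Set.range B) = C')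
    (hne : ∀ (Q : Matrix (Fin k) (Fin k) K) (ρ : L ≃+* L), IsUnit Q →
      vcode B ≠
        (fun v => Matrix.vecMul (fun i => ρ (v i)) (Q.map (algebraMap K L))) '' vcode A) :
    ¬ ∃ (X Y : Matrix (Fin n) (Fin n) L) (ρ' : L ≃+* L), IsUnit X ∧ IsUnit Y ∧
        (C' : Set (Matrix (Fin n) (Fin n) L)) =
          (fun M => X * M.map ρ' * Y) '' (C : Set (Matrix (Fin n) (Fin n) L)) := by
  rintro ⟨X, Y, ρ, hX, hY, hCC⟩
  let := RingHomInvPair.of_ringEquiv ρ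
  let := RingHomInvPair.of_ringEquiv_symm ρ
  let ψ : Matrix (Fin n) (Fin n) L ≃ₛₗ[(ρ : L →+* L)] Matrix (Fin n) (Fin n) L :=
    ρ.toSemilinearEquiv.mapMatrix.trans
      ((hX.unit.mulLeftLinearEquiv L _).trans (hY.unit.mulRightLinearEquiv L))
  have hB_eq : ∀ i, ∃ c : Fin k → K, ψ (∑ j, c j • A j) = B i := by
    intro i
    obtain ⟨M, hM, hMB⟩ : B i ∈ ψ '' C := by
      rw [← show (C' : Set _) = ψ '' C from hCC, ← hBspan]
      exact Submodule.subset_span ⟨i, rfl⟩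
    rw [← hAspan, SetLike.mem_coe, Submodule.mem_span_range_iff_exists_fun] at hM
    obtain ⟨c, rfl⟩ := hM
    exact ⟨c, hMB⟩
  choose c hc using hB_eq
  choose σ hσ using FiniteField.ringHom_algebraMap_mem_range (K := K) (ρ : L →+* L)
  let Q : Matrix (Fin k) (Fin k) K := Matrix.of fun j i => σ (c i j)
  have hBQ : B = fun i => ∑ j, Q j i • ψ (A j) := by
    ext1 i
    rw [← hc i, map_sum]
    refine Finset.sum_congr rfl fun j _ => ?_
    rw [← algebraMap_smul L, map_smulₛₗ, ← algebraMap_smul L (Q j i)]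
    simp [Q, hσ]
  have hQ : IsUnit Q := Matrix.isUnit_of_linearIndependent_sum_smul _ Q (hBQ ▸ hB)
  refine hne Q ρ hQ ?_
  calc vcode B = vcode (fun i => ∑ j, Q.map (algebraMap K L) j i • ψ (A j)) := by
        simp [hBQ, algebraMap_smul]
    _ = _ := by rw [vcode_sum_smul, vcode_semilinearEquiv_comp, Set.image_image]

/-- Let `C, C'` be `F_q`-subspaces of `Mₙ(F_{q^s})` of `F_q`-dimension
`k` with `F_q`-bases `(A₁, …, A_k)` and `(B₁, …, B_k)`.  If for every invertible
`Q ∈ M_k(F_q)` and every field automorphism `ρ` we have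
`D(B₁, …, B_k) ≠ { ρ(v)·Q : v ∈ D(A₁, …, A_k) }`, then there are no invertible
`X, Y ∈ Mₙ(F_{q^s})` and automorphism `ρ'` with `C' = { X A^{ρ'} Y : A ∈ C }`;
that is, `C` and `C'` are inequivalent as matrix rank-metric codes. -/
theorem inequiv_of_vcode_inequiv (q s n k : ℕ) (hq : IsPrimePow q) (hs : 1 ≤ s)
    (hn : 1 ≤ n) (hk : 1 ≤ k) (K L : Type*) [Field K] [Fintype K] [Field L] [Fintype L]
    [Algebra K L] (hKcard : Fintype.card K = q) (hLcard : Fintype.card L = q ^ s)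
    (C C' : Submodule K (Matrix (Fin n) (Fin n) L))
    (A B : Fin k → Matrix (Fin n) (Fin n) L)
    (hA : LinearIndependent K A) (hAspan : Submodule.span K (Set.range A) = C)
    (hB : LinearIndependent K B) (hBspan : Submodule.span K (Set.range B) = C')
    (hne : ∀ (Q : Matrix (Fin k) (Fin k) K) (ρ : L ≃+* L), IsUnit Q →
      vcode B ≠
        (fun v => Matrix.vecMul (fun i => ρ (v i)) (Q.map (algebraMap K L))) '' vcode A) :
    ¬ ∃ (X Y : Matrix (Fin n) (Fin n) L) (ρ' : L ≃+* L), IsUnit X ∧ IsUnit Y ∧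
        (C' : Set (Matrix (Fin n) (Fin n) L)) =
          (fun M => X * M.map ρ' * Y) '' (C : Set (Matrix (Fin n) (Fin n) L)) :=
  inequiv_of_vcode_inequiv_general n k K L C C' A B hAspan hB hBspan hne
end

section
/- Let L be a positive multiple of s, ι : F_{q^s} ↪ F_{q^L} the field embedding, and m ≥ 1. Suppose α_1, …, α_k ∈ F_{q^L} satisfy α_i^{q^m} = α_i for all i, and let A_1, …, A_k ∈ M_n(F_{q^s}). Then for every j ∈ {0, …, s−1}: rank( Σ_{i=1}^k α_i · ι(A_i^{σ^j}) ) = rank( Σ_{i=1}^k α_i^{q^{j'}} · ι(A_i) ), where j' is the unique integer with 0 ≤ j' < m and j' ≡ −j (mod m), and ranks are taken over F_{q^L}. Consequently rank( Σ_i α_i · ι(φ̄(A_i)) ) = Σ_{j=0}^{s−1} rank( Σ_i α_i^{q^{(m−j) mod m}} · ι(A_i) ). -/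
/-!
Raising every entry to the power `q ^ N` is a ring automorphism of `E`, so it preserves rank.
Taking `N ≡ -j (mod s)` and `N ≡ j' (mod m)` turns the first matrix into the second, because
`x ^ q ^ s = x` on `F_{q^s}` and `αᵢ ^ q ^ m = αᵢ`.

For the block formula, let `V = (b_w ^ q ^ u)` be the Moore matrix of the basis. It is
invertible, since `σ⁰, …, σ^{s-1}` are distinct characters of `F_{q^s}` and hence linearly
independent (Dedekind), and it diagonalises the regular representation:
`V φ(a) = diag(a ^ q ^ u) V`. Conjugating by `1 ⊗ V` therefore turns `Σ αᵢ φ̄(Aᵢ)` into the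
block diagonal matrix with blocks `Σ αᵢ Aᵢ^{σ^u}`.
-/

/-- The regular representation `φ : F_{q^s} → M_s(F_q)` with respect to an
`F_q`-basis `b` of `F_{q^s}`. -/
noncomputable def phi {K L : Type*} [Field K] [Field L] [Algebra K L] {s : ℕ}
    (b : Module.Basis (Fin s) K L) (α : L) : Matrix (Fin s) (Fin s) K :=
  LinearMap.toMatrix b b (LinearMap.mulLeft K α)

/-- `φ̄ : Mₙ(F_{q^s}) → M_{ns}(F_q)` sends `A = (a_{ij})` to the `n × n` block
matrix whose `(i,j)` block is `φ(a_{ij})`. -/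
noncomputable def phibar {K L : Type*} [Field K] [Field L] [Algebra K L] {s n : ℕ}
    (b : Module.Basis (Fin s) K L) (A : Matrix (Fin n) (Fin n) L) :
    Matrix (Fin n × Fin s) (Fin n × Fin s) K :=
  fun p r => phi b (A p.1 r.1) p.2 r.2

open Matrix Module
open scoped Kronecker

theorem pow_pow_eq_pow_pow_of_modEq {M : Type*} [Monoid M] {x : M} {q m a b : ℕ}
    (hx : x ^ q ^ m = x) (hab : a ≡ b [MOD m]) : x ^ q ^ a = x ^ q ^ b := by
  have hper : Function.IsPeriodicPt (· ^ q) m x := by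
    rw [Function.IsPeriodicPt, Function.IsFixedPt, pow_iterate]
    exact hx
  have hmod : ∀ c, x ^ q ^ c = x ^ q ^ (c % m) := fun c => by
    simpa only [pow_iterate] using (hper.iterate_mod_apply c).symm
  rw [hmod a, hmod b, hab]

theorem LinearMap.finrank_range_piMap {R ι : Type*} [Field R] [Fintype ι] {φ ψ : ι → Type*}
    [∀ i, AddCommGroup (φ i)] [∀ i, Module R (φ i)] [∀ i, AddCommGroup (ψ i)]
    [∀ i, Module R (ψ i)] [∀ i, FiniteDimensional R (ψ i)] (f : ∀ i, φ i →ₗ[R] ψ i) :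
    finrank R (LinearMap.range (LinearMap.piMap f)) =
      ∑ i, finrank R (LinearMap.range (f i)) := by
  have hfactor : LinearMap.piMap f =
      LinearMap.piMap (fun i => (LinearMap.range (f i)).subtype) ∘ₗ
        LinearMap.piMap (fun i => (f i).rangeRestrict) := rfl
  have hsurj : LinearMap.range (LinearMap.piMap (fun i => (f i).rangeRestrict)) = ⊤ :=
    LinearMap.range_eq_top.2 (Function.Surjective.piMap fun i => (f i).surjective_rangeRestrict)
  rw [hfactor, LinearMap.range_comp_of_range_eq_top _ hsurj,
    LinearMap.finrank_range_of_inj (Function.Injective.piMap fun i => Subtype.val_injective),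
    Module.finrank_pi_fintype]

namespace Matrix

theorem rank_blockDiagonal {R m n o : Type*} [Field R] [Fintype m] [Fintype n] [Fintype o]
    [DecidableEq o] (D : o → Matrix m n R) :
    (blockDiagonal D).rank = ∑ k, (D k).rank := by
  let eₘ : (m × o → R) ≃ₗ[R] (o → m → R) :=
    (LinearEquiv.funCongrLeft R R (Equiv.prodComm o m)).trans (LinearEquiv.curry R R o m)
  let eₙ : (n × o → R) ≃ₗ[R] (o → n → R) :=
    (LinearEquiv.funCongrLeft R R (Equiv.prodComm o n)).trans (LinearEquiv.curry R R o n)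
  have hconj : (blockDiagonal D).mulVecLin =
      eₘ.symm.toLinearMap ∘ₗ LinearMap.piMap (fun k => (D k).mulVecLin) ∘ₗ
        eₙ.toLinearMap := by
    ext v ⟨i, k⟩
    simp [eₘ, eₙ, mulVec, dotProduct, blockDiagonal_apply, Fintype.sum_prod_type]
  rw [rank, hconj, LinearMap.range_comp, LinearMap.range_comp_of_range_eq_top _ eₙ.range,
    LinearEquiv.finrank_map_eq, LinearMap.finrank_range_piMap]
  rfl

theorem rank_map_ringEquiv {R S m n : Type*} [CommRing R] [CommRing S] [Fintype n]
    (f : R ≃+* S) (M : Matrix m n R) : (M.map f).rank = M.rank := by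
  let Φ : (m → R) ≃+ (m → S) := AddEquiv.piCongrRight fun _ => f.toAddEquiv
  have hmem : ∀ v,
      v ∈ LinearMap.range M.mulVecLin ↔ Φ v ∈ LinearMap.range (M.map f).mulVecLin := by
    intro v
    simp only [LinearMap.mem_range, mulVecLin_apply]
    constructor
    · rintro ⟨u, rfl⟩
      exact ⟨f ∘ u, funext fun i => (RingHom.map_mulVec (f : R →+* S) M u i).symm⟩
    · rintro ⟨u, hu⟩
      refine ⟨f.symm ∘ u, funext fun i => f.injective ?_⟩
      rw [← RingEquiv.coe_toRingHom, RingHom.map_mulVec]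
      simpa [Function.comp_def, Φ] using congrFun hu i
  let j : LinearMap.range M.mulVecLin ≃+ LinearMap.range (M.map f).mulVecLin :=
    { Φ.toEquiv.subtypeEquiv hmem with map_add' := fun x y => Subtype.ext (map_add Φ x.1 y.1) }
  have := lift_rank_eq_of_equiv_equiv f j f.bijective fun r v =>
    Subtype.ext (funext fun i => map_mul f r (v.1 i))
  simpa [rank, finrank] using (congrArg Cardinal.toNat this).symm

theorem one_kronecker_mul_comp_of_mul_eq_diagonal_mul {R m o : Type*} [CommSemiring R]
    [Fintype m] [Fintype o] [DecidableEq m] [DecidableEq o] (V : Matrix o o R)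
    (B : Matrix m m (Matrix o o R)) (D : o → Matrix m m R)
    (h : ∀ p r, V * B p r = diagonal (fun u => D u p r) * V) :
    (1 ⊗ₖ V) * comp m m o o R B = blockDiagonal D * (1 ⊗ₖ V) := by
  ext ⟨p, u⟩ ⟨r, l⟩
  have hpr := congrFun (congrFun (h p r) u) l
  rw [diagonal_mul, mul_apply] at hpr
  simpa [mul_apply, Fintype.sum_prod_type, one_apply, blockDiagonal_apply] using hpr

theorem rank_comp_of_mul_eq_diagonal_mul {R m o : Type*} [Field R] [Fintype m] [Fintype o]
    [DecidableEq m] [DecidableEq o] {V : Matrix o o R} (hV : V.det ≠ 0)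
    (B : Matrix m m (Matrix o o R)) (D : o → Matrix m m R)
    (h : ∀ p r, V * B p r = diagonal (fun u => D u p r) * V) :
    (comp m m o o R B).rank = ∑ u, (D u).rank := by
  have hW : (1 ⊗ₖ V : Matrix (m × o) (m × o) R).det ≠ 0 := by
    simp [det_kronecker, hV]
  rw [← rank_mul_eq_right_of_det_ne_zero _ _ hW,
    one_kronecker_mul_comp_of_mul_eq_diagonal_mul V B D h,
    rank_mul_eq_left_of_det_ne_zero _ _ hW, rank_blockDiagonal]

end Matrix

namespace FiniteField

theorem frobeniusAlgHom_pow_apply {K : Type*} [Field K] [Fintype K] (R : Type*) [CommRing R]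
    [Algebra K R] (u : ℕ) (x : R) :
    (frobeniusAlgHom K R ^ u) x = x ^ Fintype.card K ^ u := by
  rw [AlgHom.coe_pow, coe_frobeniusAlgHom, pow_iterate]

theorem rank_map_pow_card_pow (K : Type*) [Field K] [Fintype K] {E m n : Type*} [Field E]
    [Finite E] [Algebra K E] [Fintype n] (M : Matrix m n E) (N : ℕ) :
    (M.map (· ^ Fintype.card K ^ N)).rank = M.rank := by
  have hσ : ⇑(frobeniusAlgEquivOfAlgebraic K E ^ N) = (· ^ Fintype.card K ^ N) := by
    rw [AlgEquiv.coe_pow, coe_frobeniusAlgEquivOfAlgebraic_iterate]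
  rw [← hσ]
  exact rank_map_ringEquiv (frobeniusAlgEquivOfAlgebraic K E ^ N : E ≃ₐ[K] E).toRingEquiv M

end FiniteField

def mooreMatrix {F : Type*} [Monoid F] {s : ℕ} (q : ℕ) (v : Fin s → F) :
    Matrix (Fin s) (Fin s) F :=
  of fun u w => v w ^ q ^ (u : ℕ)

section Moore

open FiniteField

variable {K F : Type*} [Field K] [Fintype K] [Field F] [Algebra K F] {s : ℕ}

theorem det_mooreMatrix_ne_zero [Finite F] (b : Basis (Fin s) K F) :
    (mooreMatrix (Fintype.card K) ⇑b).det ≠ 0 := by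
  let χ : Fin s → (F →* F) := fun u => (frobeniusAlgHom K F ^ (u : ℕ)).toRingHom.toMonoidHom
  have hχ_inj : Function.Injective χ := by
    intro u v huv
    have hs : finrank K F = s := by simp [finrank_eq_card_basis b]
    have := (bijective_frobeniusAlgHom_pow K F).1 (a₁ := Fin.cast hs.symm u)
      (a₂ := Fin.cast hs.symm v) (AlgHom.ext fun x => by simpa [χ] using DFunLike.congr_fun huv x)
    exact Fin.ext (by simpa using congrArg Fin.val this)
  have hindep : LinearIndependent F (fun u => ⇑(χ u)) :=
    (linearIndependent_monoidHom F F).comp χ hχ_inj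
  rw [Ne, ← exists_vecMul_eq_zero_iff]
  rintro ⟨c, hc0, hc⟩
  refine hc0 (funext (Fintype.linearIndependent_iff.1 hindep c ?_))
  have hT : (∑ u, c u • (frobeniusAlgHom K F ^ (u : ℕ)).toLinearMap : F →ₗ[K] F) = 0 :=
    b.ext fun w => by
      simpa [mooreMatrix, vecMul, dotProduct, coe_frobeniusAlgHom, pow_iterate] using congrFun hc w
  funext x
  simpa [χ] using LinearMap.congr_fun hT x

theorem mooreMatrix_mul_phi (b : Basis (Fin s) K F) (a : F) :
    mooreMatrix (Fintype.card K) ⇑b * (phi b a).map (algebraMap K F) =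
      diagonal (fun u : Fin s => a ^ Fintype.card K ^ (u : ℕ)) *
        mooreMatrix (Fintype.card K) ⇑b := by
  ext u l
  have hcol : ∑ w, phi b a w l • b w = a * b l := by
    simp [phi, LinearMap.toMatrix_apply, b.sum_repr]
  have := congrArg (frobeniusAlgHom K F ^ (u : ℕ)) hcol
  simp only [map_sum, map_smul, map_mul, frobeniusAlgHom_pow_apply] at this
  rw [mul_apply, diagonal_mul]
  simpa [mooreMatrix, Algebra.smul_def, mul_comm] using this

end Moore

section FrobeniusTwist

open FiniteField

variable {K Ls E : Type*} [Field K] [Fintype K] [Field Ls] [Fintype Ls] [Field E]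
  [Algebra K Ls] [Algebra Ls E] [Algebra K E] {ι : Type*} [Fintype ι]

theorem rank_sum_smul_map_frobenius_twist [Finite E] {n : Type*} [Fintype n] {m j j' N : ℕ}
    (α : ι → E) (hα : ∀ i, α i ^ Fintype.card K ^ m = α i) (A : ι → Matrix n n Ls)
    (hjN : finrank K Ls ∣ j + N) (hN : N ≡ j' [MOD m]) :
    (∑ i, α i • ((A i).map fun x => x ^ Fintype.card K ^ j).map (algebraMap Ls E)).rank =
      (∑ i, (α i ^ Fintype.card K ^ j') • (A i).map (algebraMap Ls E)).rank := by
  have hLs : ∀ a : Ls, a ^ Fintype.card K ^ finrank K Ls = a := fun a => by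
    rw [← card_eq_pow_finrank, FiniteField.pow_card]
  rw [← rank_map_pow_card_pow K _ N]
  congr 1
  ext p r
  simp only [map_apply, Matrix.sum_apply, Matrix.smul_apply, smul_eq_mul]
  rw [← frobeniusAlgHom_pow_apply E N, map_sum]
  refine Finset.sum_congr rfl fun i _ => ?_
  rw [map_mul, frobeniusAlgHom_pow_apply, frobeniusAlgHom_pow_apply,
    pow_pow_eq_pow_pow_of_modEq (hα i) hN, ← map_pow, ← pow_mul, ← pow_add,
    pow_pow_eq_pow_pow_of_modEq (hLs _) (Nat.modEq_zero_iff_dvd.2 hjN), pow_zero, pow_one]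

theorem rank_sum_smul_phibar [IsScalarTower K Ls E] {s n : ℕ} (b : Basis (Fin s) K Ls)
    (α : ι → E) (A : ι → Matrix (Fin n) (Fin n) Ls) :
    (∑ i, α i • (phibar b (A i)).map (algebraMap K E)).rank =
      ∑ u : Fin s,
        (∑ i, α i •
          ((A i).map fun x => x ^ Fintype.card K ^ (u : ℕ)).map (algebraMap Ls E)).rank := by
  let V := (mooreMatrix (Fintype.card K) ⇑b).map (algebraMap Ls E)
  have hV : V.det ≠ 0 := by
    rw [show V = (algebraMap Ls E).mapMatrix _ from rfl, ← RingHom.map_det]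
    exact (map_ne_zero _).2 (det_mooreMatrix_ne_zero b)
  have hphi : ∀ a, V * (phi b a).map (algebraMap K E) =
      diagonal (fun u : Fin s => algebraMap Ls E (a ^ Fintype.card K ^ (u : ℕ))) * V := by
    intro a
    have : (phi b a).map (algebraMap K E) =
        ((phi b a).map (algebraMap K Ls)).map (algebraMap Ls E) := by
      ext; simp [IsScalarTower.algebraMap_apply K Ls E]
    rw [this, ← Matrix.map_mul, mooreMatrix_mul_phi, Matrix.map_mul, diagonal_map (map_zero _)]
  have hcomp : ∑ i, α i • (phibar b (A i)).map (algebraMap K E) =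
      comp _ _ _ _ _ (of fun p r => ∑ i, α i • (phi b (A i p r)).map (algebraMap K E)) := by
    ext; simp [phibar, Matrix.sum_apply]
  rw [hcomp, rank_comp_of_mul_eq_diagonal_mul hV]
  intro p r
  rw [of_apply]
  simp only [Matrix.mul_sum, Matrix.mul_smul, hphi, ← Matrix.smul_mul, ← Finset.sum_mul]
  congr 1
  ext u v
  by_cases huv : u = v <;> simp [Matrix.sum_apply, huv]

end FrobeniusTwist

theorem rank_frobenius_shift_general (q s n k m : ℕ) (hm : 1 ≤ m)
    (K Ls E : Type*) [Field K] [Fintype K] [Field Ls] [Fintype Ls] [Field E] [Fintype E]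
    [Algebra K Ls] [Algebra Ls E] [Algebra K E] [IsScalarTower K Ls E]
    (hKcard : Fintype.card K = q)
    (b : Module.Basis (Fin s) K Ls) (α : Fin k → E) (hα : ∀ i, α i ^ q ^ m = α i)
    (A : Fin k → Matrix (Fin n) (Fin n) Ls) :
    (∀ (j : Fin s) (j' : ℕ), j' < m → (j' + (j : ℕ)) % m = 0 →
        (∑ i, α i • ((A i).map fun x => x ^ q ^ (j : ℕ)).map (algebraMap Ls E)).rank =
          (∑ i, (α i ^ q ^ j') • (A i).map (algebraMap Ls E)).rank) ∧
      (∑ i, α i • (phibar b (A i)).map (algebraMap K E)).rank =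
        ∑ j : Fin s,
          (∑ i, (α i ^ q ^ ((m - (j : ℕ) % m) % m)) • (A i).map (algebraMap Ls E)).rank := by
  subst hKcard
  have twist : ∀ (j : Fin s) (j' : ℕ), (j' + (j : ℕ)) % m = 0 →
      (∑ i, α i • ((A i).map fun x => x ^ Fintype.card K ^ (j : ℕ)).map (algebraMap Ls E)).rank =
        (∑ i, (α i ^ Fintype.card K ^ j') • (A i).map (algebraMap Ls E)).rank := by
    intro j j' hjj'
    have hsm : s * m - j + j = s * m :=
      Nat.sub_add_cancel (j.2.le.trans (Nat.le_mul_of_pos_right s hm))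
    refine rank_sum_smul_map_frobenius_twist α hα A (N := s * m - j) ?_ ?_
    · rw [finrank_eq_card_basis b, Fintype.card_fin, add_comm, hsm]
      exact dvd_mul_right s m
    · refine Nat.ModEq.add_right_cancel' (j : ℕ) ?_
      rw [Nat.ModEq, hsm, Nat.mul_mod_left, hjj']
  refine ⟨fun j j' _ => twist j j', ?_⟩
  rw [rank_sum_smul_phibar b]
  refine Finset.sum_congr rfl fun j _ => twist j _ ?_
  rw [Nat.mod_add_mod, ← Nat.add_mod_mod, Nat.sub_add_cancel (Nat.mod_lt _ hm).le, Nat.mod_self]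

/-- Let `L₀` be a positive multiple of `s`, `ι : F_{q^s} ↪ F_{q^{L₀}}`
the field embedding (`E = F_{q^{L₀}}`), and `m ≥ 1`.  Suppose `α₁, …, α_k ∈ F_{q^{L₀}}`
satisfy `αᵢ^{qᵐ} = αᵢ`, and let `A₁, …, A_k ∈ Mₙ(F_{q^s})`.  Then for every
`j ∈ {0, …, s−1}` and the unique `0 ≤ j' < m` with `j' ≡ −j (mod m)`,
`rank(Σᵢ αᵢ·ι(Aᵢ^{σʲ})) = rank(Σᵢ αᵢ^{q^{j'}}·ι(Aᵢ))`; consequently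
`rank(Σᵢ αᵢ·ι(φ̄(Aᵢ))) = Σ_{j=0}^{s−1} rank(Σᵢ αᵢ^{q^{(m−j) mod m}}·ι(Aᵢ))`,
ranks taken over `F_{q^{L₀}}`. -/
theorem rank_frobenius_shift (q s n k L₀ m : ℕ) (hq : IsPrimePow q)
    (hs : 1 ≤ s) (hn : 1 ≤ n) (hk : 1 ≤ k) (hL₀ : 1 ≤ L₀) (hdvd : s ∣ L₀) (hm : 1 ≤ m)
    (K Ls E : Type*) [Field K] [Fintype K] [Field Ls] [Fintype Ls] [Field E] [Fintype E]
    [Algebra K Ls] [Algebra Ls E] [Algebra K E] [IsScalarTower K Ls E]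
    (hKcard : Fintype.card K = q) (hLscard : Fintype.card Ls = q ^ s)
    (hEcard : Fintype.card E = q ^ L₀)
    (b : Module.Basis (Fin s) K Ls) (α : Fin k → E) (hα : ∀ i, α i ^ q ^ m = α i)
    (A : Fin k → Matrix (Fin n) (Fin n) Ls) :
    (∀ (j : Fin s) (j' : ℕ), j' < m → (j' + (j : ℕ)) % m = 0 →
        (∑ i, α i • ((A i).map fun x => x ^ q ^ (j : ℕ)).map (algebraMap Ls E)).rank =
          (∑ i, (α i ^ q ^ j') • (A i).map (algebraMap Ls E)).rank) ∧
      (∑ i, α i • (phibar b (A i)).map (algebraMap K E)).rank =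
        ∑ j : Fin s,
          (∑ i, (α i ^ q ^ ((m - (j : ℕ) % m) % m)) • (A i).map (algebraMap Ls E)).rank :=
  rank_frobenius_shift_general q s n k m hm K Ls E hKcard b α hα A
end
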